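/- Let σ be a Grassmannian permutation with unique descent at position k, written σ = a_1...a_k b_1...b_{n−k}. If in a reduced decomposition of σ the value a_i is at some step exchanged with the value b_j, then at some later step a_i is exchanged with b_{j'} for every j' < j. -/

import Mathlib

/-!
Read a word as a wiring diagram: after `t` steps the wire carrying the value `v` sits at
position `wirePos w t v`. Counting inversions shows that every step of a reduced word is an
ascent, so two wires `u < v` cross at most once, turning "`u` left of `v`" into "`v` left of
`u`", and they cross iff they form an inversion of the final permutation.

If `a_i` crosses `b_j` at step `t`, then just before that step `b_j` sits immediately left of
`a_i`. A wire `b_{j'}` with `j' < j` never crosses `b_j`, so it is left of `b_j` at that time and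
hence left of `a_i` right after the step. As `a_i` ends up left of `b_{j'}`, they cross later.
-/

/-- The adjacent transposition `sᵢ = (i, i+1)` acting on `ℕ` (positions `1, …, n` are used). -/
def sgen (i : ℕ) : Equiv.Perm ℕ := Equiv.swap i (i + 1)

/-- The permutation represented by a word `w = w₁ w₂ … w_m`, namely `s_{w₁} s_{w₂} ⋯ s_{w_m}`. -/
def wordPerm (w : List ℕ) : Equiv.Perm ℕ := (w.map sgen).prod

/-- A word is reduced if it has minimal length among all words representing the same
permutation. -/
def IsReducedWord (w : List ℕ) : Prop :=
  ∀ v : List ℕ, wordPerm v = wordPerm w → w.length ≤ v.length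

/-- `w` is a reduced word of the permutation `σ`. -/
def IsReducedWordOf (σ : Equiv.Perm ℕ) (w : List ℕ) : Prop :=
  wordPerm w = σ ∧ IsReducedWord w
/-- The (values of the) pair of wires crossing at step `t` (0-indexed) of the wiring diagram
of the word `w`: the values in positions `w_t` and `w_t + 1` just before step `t`. -/
def crossing (w : List ℕ) (t : ℕ) : ℕ × ℕ :=
  (wordPerm (w.take t) (w.getD t 0), wordPerm (w.take t) (w.getD t 0 + 1))

/-- Two ordered pairs represent the same unordered crossing. -/
def SameCross (p q : ℕ × ℕ) : Prop := p = q ∨ p = (q.2, q.1)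

instance (p q : ℕ × ℕ) : Decidable (SameCross p q) := by
  unfold SameCross; infer_instance

open Equiv Finset

lemma sgen_apply (i x : ℕ) :
    sgen i x = if x = i then i + 1 else if x = i + 1 then i else x := by
  simp [sgen, swap_apply_def]

lemma sgen_apply_of_ne {i x : ℕ} (h₁ : x ≠ i) (h₂ : x ≠ i + 1) : sgen i x = x :=
  swap_apply_of_ne_of_ne h₁ h₂

lemma sgen_apply_self (i : ℕ) : sgen i i = i + 1 := swap_apply_left i (i + 1)

lemma sgen_apply_add_one (i : ℕ) : sgen i (i + 1) = i := swap_apply_right i (i + 1)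

lemma sgen_mul_self (i : ℕ) : sgen i * sgen i = 1 := swap_mul_self i (i + 1)

lemma sgen_inv (i : ℕ) : (sgen i)⁻¹ = sgen i := swap_inv i (i + 1)

lemma sgen_symm (i : ℕ) : (sgen i).symm = sgen i := symm_swap i (i + 1)

lemma sgen_lt_sgen_iff {i a b : ℕ} (h₁ : ¬(a = i ∧ b = i + 1)) (h₂ : ¬(b = i ∧ a = i + 1)) :
    sgen i a < sgen i b ↔ a < b := by
  rw [sgen_apply, sgen_apply]; split_ifs <;> omega

lemma wordPerm_nil : wordPerm [] = 1 := rfl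

lemma wordPerm_append (u v : List ℕ) : wordPerm (u ++ v) = wordPerm u * wordPerm v := by
  simp [wordPerm]

lemma wordPerm_singleton (i : ℕ) : wordPerm [i] = sgen i := by
  simp [wordPerm]

lemma wordPerm_take_succ {w : List ℕ} {t : ℕ} (ht : t < w.length) :
    wordPerm (w.take (t + 1)) = wordPerm (w.take t) * sgen (w.getD t 0) := by
  rw [List.take_add_one, List.getElem?_eq_getElem ht, wordPerm_append, List.getD_eq_getElem _ _ ht]
  rfl

def inversions (π : Perm ℕ) (B : ℕ) : Finset (ℕ × ℕ) :=
  (range (B + 1) ×ˢ range (B + 1)).filter fun p => p.1 < p.2 ∧ π p.2 < π p.1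

section Inversions

variable {π : Perm ℕ} {i B : ℕ}

lemma mem_inversions {p : ℕ × ℕ} :
    p ∈ inversions π B ↔ p.1 ≤ B ∧ p.2 ≤ B ∧ p.1 < p.2 ∧ π p.2 < π p.1 := by
  simp [inversions, and_assoc]

lemma inversions_one : inversions 1 B = ∅ := by
  ext p; simp only [mem_inversions, Perm.one_apply, notMem_empty, iff_false]; omega

lemma inversions_mul_sgen_of_lt (hB : i + 1 ≤ B) (h : π i < π (i + 1)) :
    inversions (π * sgen i) B =
      insert (i, i + 1) ((inversions π B).map (prodCongr (sgen i) (sgen i)).toEmbedding) := by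
  ext ⟨a, b⟩
  simp only [mem_insert, mem_map_equiv, mem_inversions, Perm.mul_apply, Prod.mk.injEq,
    prodCongr_symm, prodCongr_apply, Prod.map, sgen_symm]
  rw [sgen_apply, sgen_apply]
  split_ifs <;> subst_vars <;> omega

lemma card_inversions_mul_sgen_of_lt (hB : i + 1 ≤ B) (h : π i < π (i + 1)) :
    #(inversions (π * sgen i) B) = #(inversions π B) + 1 := by
  rw [inversions_mul_sgen_of_lt hB h, card_insert_of_notMem, card_map]
  simp only [mem_map_equiv, prodCongr_symm, prodCongr_apply, Prod.map_apply, sgen_symm,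
    sgen_apply_self, sgen_apply_add_one, mem_inversions]
  omega

lemma card_inversions_mul_sgen_of_gt (hB : i + 1 ≤ B) (h : π (i + 1) < π i) :
    #(inversions (π * sgen i) B) + 1 = #(inversions π B) := by
  have h' : (π * sgen i) i < (π * sgen i) (i + 1) := by
    simpa only [Perm.mul_apply, sgen_apply_self, sgen_apply_add_one] using h
  simpa only [mul_assoc, sgen_mul_self, mul_one] using (card_inversions_mul_sgen_of_lt hB h').symm

lemma card_inversions_mul_sgen_le (hB : i + 1 ≤ B) :
    #(inversions (π * sgen i) B) ≤ #(inversions π B) + 1 := by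
  rcases lt_or_gt_of_ne (π.injective.ne (Nat.ne_add_one i)) with h | h
  · exact (card_inversions_mul_sgen_of_lt hB h).le
  · have := card_inversions_mul_sgen_of_gt hB h
    omega

lemma card_inversions_wordPerm_append_le (u v : List ℕ) (hv : ∀ i ∈ v, i + 1 ≤ B) :
    #(inversions (wordPerm (u ++ v)) B) ≤ #(inversions (wordPerm u) B) + v.length := by
  induction v generalizing u with
  | nil => simp
  | cons i v ih =>
    have hstep := card_inversions_mul_sgen_le (π := wordPerm u) (hv i List.mem_cons_self)
    have := ih (u ++ [i]) fun j hj => hv j (List.mem_cons_of_mem i hj)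
    rw [wordPerm_append u, wordPerm_singleton] at this
    rw [List.append_cons, List.length_cons]
    omega

end Inversions

def FixesAbove (π : Perm ℕ) (B : ℕ) : Prop := ∀ x, B < x → π x = x

section FixesAbove

variable {π ρ : Perm ℕ} {i B : ℕ}

lemma FixesAbove.mul (hπ : FixesAbove π B) (hρ : FixesAbove ρ B) : FixesAbove (π * ρ) B :=
  fun x hx => by rw [Perm.mul_apply, hρ x hx, hπ x hx]

lemma fixesAbove_sgen (hB : i + 1 ≤ B) : FixesAbove (sgen i) B :=
  fun _ hx => sgen_apply_of_ne (by omega) (by omega)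

lemma fixesAbove_wordPerm {w : List ℕ} (hw : ∀ i ∈ w, i + 1 ≤ B) : FixesAbove (wordPerm w) B :=
  List.prod_induction (fun π => FixesAbove π B) (fun _ _ => FixesAbove.mul) (fun _ _ => rfl) <| by
    simpa only [List.forall_mem_map] using fun i hi => fixesAbove_sgen (hw i hi)

lemma FixesAbove.apply_le (hπ : FixesAbove π B) {x : ℕ} (hx : x ≤ B) : π x ≤ B := by
  by_contra! h
  exact absurd (π.injective (hπ _ h)) (by omega)

lemma FixesAbove.add_one_le_of_apply_lt (hπ : FixesAbove π B) (h : π (i + 1) < π i) :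
    i + 1 ≤ B := by
  by_contra! hi
  rw [hπ (i + 1) hi] at h
  rcases (Nat.lt_add_one_iff.1 hi).lt_or_eq with hi | rfl
  · rw [hπ i hi] at h; omega
  · exact absurd (hπ.apply_le le_rfl) (by omega)

end FixesAbove

/-- A permutation of `ℕ` without descents is strictly monotone, hence the identity. -/
lemma Equiv.Perm.exists_apply_add_one_lt {π : Perm ℕ} (hπ : π ≠ 1) : ∃ i, π (i + 1) < π i := by
  by_contra! h
  have hmono : StrictMono π := strictMono_nat_of_lt_succ fun i =>
    (h i).lt_of_ne (π.injective.ne (Nat.ne_add_one i))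
  have := Subsingleton.elim (hmono.orderIsoOfSurjective π π.surjective) (OrderIso.refl ℕ)
  exact hπ (ext fun x => DFunLike.congr_fun this x)

lemma FixesAbove.exists_wordPerm_eq {π : Perm ℕ} {B : ℕ} (hπ : FixesAbove π B) :
    ∃ v : List ℕ, wordPerm v = π ∧ v.length = #(inversions π B) := by
  induction hN : #(inversions π B) generalizing π with
  | zero =>
    refine ⟨[], ?_, rfl⟩
    by_contra hne
    obtain ⟨i, hi⟩ := Perm.exists_apply_add_one_lt (Ne.symm hne)
    have hB := hπ.add_one_le_of_apply_lt hi
    have : (i, i + 1) ∈ inversions π B := mem_inversions.2 ⟨by omega, hB, by omega, hi⟩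
    simp [card_eq_zero.1 hN] at this
  | succ N ih =>
    obtain ⟨i, hi⟩ := Perm.exists_apply_add_one_lt (π := π) (by rintro rfl; simp [inversions_one] at hN)
    have hB := hπ.add_one_le_of_apply_lt hi
    obtain ⟨v, hv, hlen⟩ := ih (hπ.mul (fixesAbove_sgen hB))
      (by have := card_inversions_mul_sgen_of_gt hB hi; omega)
    refine ⟨v ++ [i], ?_, by simp [hlen]⟩
    rw [wordPerm_append, wordPerm_singleton, hv, mul_assoc, sgen_mul_self, mul_one]

lemma IsReducedWord.length_le_card_inversions {w : List ℕ} {B : ℕ} (hw : IsReducedWord w)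
    (hB : ∀ i ∈ w, i + 1 ≤ B) : w.length ≤ #(inversions (wordPerm w) B) := by
  obtain ⟨v, hv, hlen⟩ := (fixesAbove_wordPerm hB).exists_wordPerm_eq
  exact hlen ▸ hw v hv

/-- A descent at step `t` would destroy an inversion, leaving at most `w.length - 2` of them. -/
theorem IsReducedWord.crossing_fst_lt_snd {w : List ℕ} (hw : IsReducedWord w) {t : ℕ}
    (ht : t < w.length) : (crossing w t).1 < (crossing w t).2 := by
  set B := w.sum + 1
  have hB : ∀ i ∈ w, i + 1 ≤ B := fun i hi => Nat.add_le_add_right (List.le_sum_of_mem hi) 1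
  by_contra! hle
  have hdesc : wordPerm (w.take t) (w.getD t 0 + 1) < wordPerm (w.take t) (w.getD t 0) :=
    hle.lt_of_ne ((wordPerm _).injective.ne (Nat.ne_add_one _).symm)
  have hstep := card_inversions_mul_sgen_of_gt
    (hB _ (List.getD_eq_getElem w 0 ht ▸ List.getElem_mem ht)) hdesc
  have hprefix := card_inversions_wordPerm_append_le [] (w.take t)
    fun i hi => hB i (List.mem_of_mem_take hi)
  have hsuffix := card_inversions_wordPerm_append_le (w.take (t + 1)) (w.drop (t + 1))
    fun i hi => hB i (List.mem_of_mem_drop hi)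
  rw [List.take_append_drop, wordPerm_take_succ ht] at hsuffix
  rw [List.nil_append, wordPerm_nil, inversions_one] at hprefix
  have := hw.length_le_card_inversions hB
  simp only [List.length_take, List.length_drop, card_empty] at hprefix hsuffix
  omega

/-- The position of the wire carrying the value `v` after the first `t` steps of `w`. -/
def wirePos (w : List ℕ) (t v : ℕ) : ℕ := (wordPerm (w.take t))⁻¹ v

section WirePos

variable {w : List ℕ} {t u v : ℕ}

lemma wirePos_succ (ht : t < w.length) (v : ℕ) :
    wirePos w (t + 1) v = sgen (w.getD t 0) (wirePos w t v) := by
  rw [wirePos, wordPerm_take_succ ht, mul_inv_rev, sgen_inv, Perm.mul_apply, wirePos]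

lemma wirePos_length (w : List ℕ) (v : ℕ) : wirePos w w.length v = (wordPerm w)⁻¹ v := by
  rw [wirePos, List.take_length]

lemma sameCross_swap {c : ℕ × ℕ} : SameCross c (u, v) ↔ SameCross c (v, u) := or_comm

lemma sameCross_crossing_iff :
    SameCross (crossing w t) (u, v) ↔
      wirePos w t u = w.getD t 0 ∧ wirePos w t v = w.getD t 0 + 1 ∨
        wirePos w t v = w.getD t 0 ∧ wirePos w t u = w.getD t 0 + 1 := by
  simp only [SameCross, crossing, wirePos, Prod.mk.injEq, Perm.inv_eq_iff_eq, @eq_comm _ u,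
    @eq_comm _ v]

lemma wirePos_succ_lt_iff (ht : t < w.length) (hx : ¬ SameCross (crossing w t) (u, v)) :
    wirePos w (t + 1) u < wirePos w (t + 1) v ↔ wirePos w t u < wirePos w t v := by
  rw [sameCross_crossing_iff, not_or] at hx
  rw [wirePos_succ ht, wirePos_succ ht]
  exact sgen_lt_sgen_iff hx.1 hx.2

lemma exists_sameCross_crossing_of_wirePos_lt {s : ℕ} (hs : s ≤ w.length)
    (hlt : wirePos w s u < wirePos w s v) (hend : ¬ wirePos w w.length u < wirePos w w.length v) :
    ∃ t, s ≤ t ∧ t < w.length ∧ SameCross (crossing w t) (u, v) := by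
  by_contra! hnone
  have hkeep : ∀ t, s ≤ t → t ≤ w.length → wirePos w t u < wirePos w t v := by
    intro t hst
    induction t, hst using Nat.le_induction with
    | base => exact fun _ => hlt
    | succ t hst ih =>
      exact fun ht => (wirePos_succ_lt_iff ht (hnone t hst ht)).2 (ih (by omega))
  exact hend (hkeep _ hs le_rfl)

end WirePos

namespace IsReducedWord

variable {w : List ℕ} {t u v : ℕ}

lemma wirePos_of_sameCross_crossing (hw : IsReducedWord w) (ht : t < w.length) (huv : u < v)
    (hx : SameCross (crossing w t) (u, v)) :
    wirePos w t u = w.getD t 0 ∧ wirePos w t v = w.getD t 0 + 1 := by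
  refine (sameCross_crossing_iff.1 hx).resolve_right fun ⟨hv, hu⟩ => ?_
  have hcross : crossing w t = (v, u) := by
    rw [crossing, ← hu, ← hv]
    simp [wirePos]
  have := hw.crossing_fst_lt_snd ht
  rw [hcross] at this
  omega

lemma wirePos_lt_of_wirePos_succ_lt (hw : IsReducedWord w) (ht : t < w.length) (huv : u < v)
    (h : wirePos w (t + 1) u < wirePos w (t + 1) v) : wirePos w t u < wirePos w t v := by
  by_cases hx : SameCross (crossing w t) (u, v)
  · obtain ⟨hu, hv⟩ := hw.wirePos_of_sameCross_crossing ht huv hx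
    omega
  · exact (wirePos_succ_lt_iff ht hx).1 h

lemma wirePos_lt_of_le (hw : IsReducedWord w) (huv : u < v) {s : ℕ} (hst : s ≤ t)
    (ht : t ≤ w.length) (h : wirePos w t u < wirePos w t v) : wirePos w s u < wirePos w s v := by
  induction t, hst using Nat.le_induction with
  | base => exact h
  | succ t hst ih => exact ih (by omega) (hw.wirePos_lt_of_wirePos_succ_lt (by omega) huv h)

lemma inv_lt_inv_of_sameCross_crossing (hw : IsReducedWord w) (ht : t < w.length) (huv : u < v)
    (hx : SameCross (crossing w t) (u, v)) : (wordPerm w)⁻¹ v < (wordPerm w)⁻¹ u := by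
  obtain ⟨hu, hv⟩ := hw.wirePos_of_sameCross_crossing ht huv hx
  have hswapped : wirePos w (t + 1) v < wirePos w (t + 1) u := by
    rw [wirePos_succ ht, wirePos_succ ht, hu, hv, sgen_apply_self, sgen_apply_add_one]
    omega
  refine lt_of_not_ge fun hle => ?_
  have hend : wirePos w w.length u < wirePos w w.length v := by
    rw [wirePos_length, wirePos_length]
    exact hle.lt_of_ne ((wordPerm w)⁻¹.injective.ne huv.ne)
  have := hw.wirePos_lt_of_le (s := t + 1) huv ht le_rfl hend
  omega

theorem exists_later_sameCross_crossing (hw : IsReducedWord w) {a b c : ℕ} (ht : t < w.length)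
    (hx : SameCross (crossing w t) (a, b)) (hcb : c < b)
    (hac_end : (wordPerm w)⁻¹ a < (wordPerm w)⁻¹ c)
    (hcb_end : (wordPerm w)⁻¹ c < (wordPerm w)⁻¹ b) :
    ∃ t', t < t' ∧ t' < w.length ∧ SameCross (crossing w t') (a, c) := by
  have hba : b < a := by
    rcases lt_trichotomy a b with hab | rfl | hab
    · have := hw.inv_lt_inv_of_sameCross_crossing ht hab hx
      omega
    · omega
    · exact hab
  obtain ⟨hb, ha⟩ := hw.wirePos_of_sameCross_crossing ht hba (sameCross_swap.1 hx)
  have hcb_t : wirePos w t c < wirePos w t b :=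
    hw.wirePos_lt_of_le hcb ht.le le_rfl (by rwa [wirePos_length, wirePos_length])
  have hca : wirePos w (t + 1) c < wirePos w (t + 1) a := by
    rw [wirePos_succ ht, wirePos_succ ht, ha, sgen_apply_add_one,
      sgen_apply_of_ne (by omega) (by omega)]
    omega
  obtain ⟨t', ht', ht'len, hx'⟩ := exists_sameCross_crossing_of_wirePos_lt ht hca
    (by rw [wirePos_length, wirePos_length]; omega)
  exact ⟨t', ht', ht'len, sameCross_swap.1 hx'⟩

end IsReducedWord

theorem grassmannian_later_swaps_general (k : ℕ) (σ : Equiv.Perm ℕ)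
    (hdesc : ∀ i : ℕ, 1 ≤ i → (σ (i + 1) < σ i ↔ i = k))
    (w : List ℕ) (hw : IsReducedWordOf σ w)
    (t p q : ℕ) (ht : t < w.length)
    (hp : 1 ≤ p ∧ p ≤ k)
    (hx : SameCross (crossing w t) (σ p, σ q)) :
    ∀ q' : ℕ, k < q' → q' < q →
      ∃ t' : ℕ, t < t' ∧ t' < w.length ∧ SameCross (crossing w t') (σ p, σ q') := by
  obtain ⟨rfl, hred⟩ := hw
  intro q' hkq' hq'q
  have hincr : ∀ i, k + 1 ≤ i → wordPerm w i < wordPerm w (i + 1) := fun i hi =>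
    (not_lt.1 fun h => absurd ((hdesc i (by omega)).1 h) (by omega)).lt_of_ne
      ((wordPerm w).injective.ne (Nat.ne_add_one i))
  have hb_lt : wordPerm w q' < wordPerm w q :=
    Nat.rel_of_forall_rel_succ_of_le_of_lt (· < ·) hincr hkq' hq'q
  refine hred.exists_later_sameCross_crossing ht hx hb_lt ?_ ?_ <;>
    simp only [Perm.coe_inv, symm_apply_apply] <;> omega

/-- Let `σ = a₁…a_k b₁…b_{n−k}` be Grassmannian with unique descent at position `k`.
If in a reduced decomposition of `σ` the value `a_i = σ p` (`p ≤ k`) is exchanged with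
`b_j = σ q` (`k < q`) at step `t`, then for every `q'` with `k < q' < q` there is a later
step at which `a_i` is exchanged with `b_{j'} = σ q'`. -/
theorem grassmannian_later_swaps (n k : ℕ) (σ : Equiv.Perm ℕ)
    (hk : 1 ≤ k ∧ k < n)
    (hσ : ∀ i : ℕ, i = 0 ∨ n < i → σ i = i)
    (hdesc : ∀ i : ℕ, 1 ≤ i → (σ (i + 1) < σ i ↔ i = k))
    (w : List ℕ) (hw : IsReducedWordOf σ w)
    (t p q : ℕ) (ht : t < w.length)
    (hp : 1 ≤ p ∧ p ≤ k) (hq : k < q ∧ q ≤ n)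
    (hx : SameCross (crossing w t) (σ p, σ q)) :
    ∀ q' : ℕ, k < q' → q' < q →
      ∃ t' : ℕ, t < t' ∧ t' < w.length ∧ SameCross (crossing w t') (σ p, σ q') :=
  grassmannian_later_swaps_general k σ hdesc w hw t p q ht hp hx
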